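/- Let (F,+,*) be a pre-semifield of order p^a for a prime p, and let G(F) be its semifield group. Then G(F) is an ultraspecial p-group of order |F|^3 that has at least two abelian subgroups of order |F|^2; indeed A1 = {(a,0,c) : a,c ∈ F} and A2 = {(0,b,c) : b,c ∈ F} are abelian subgroups of G(F) of order |F|^2. -/

import Mathlib

/-- A finite `p`-group is extraspecial if it is nonabelian, its derived subgroup,
center and Frattini subgroup coincide, and its center has order `p`. -/
def IsExtraspecial (p : ℕ) (G : Type*) [Group G] : Prop :=
  (∃ a b : G, a * b ≠ b * a) ∧
  commutator G = Subgroup.center G ∧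
  Subgroup.center G = frattini G ∧
  Nat.card (Subgroup.center G) = p

/-- A `p`-group is semi-extraspecial if for every subgroup `N` of the center of
index `p` in the center (such subgroups are automatically normal in `G`),
the quotient `G ⧸ N` is extraspecial. -/
def IsSemiExtraspecial (p : ℕ) (G : Type*) [Group G] : Prop :=
  ∀ (N : Subgroup G) [N.Normal], N ≤ Subgroup.center G →
    (N.subgroupOf (Subgroup.center G)).index = p → IsExtraspecial p (G ⧸ N)

/-- A (finite) pre-semifield structure on an additive abelian group `F`: a
multiplication satisfying both distributive laws and having no zero divisors.
(Finiteness and nontriviality of `F` are imposed as hypotheses where needed.) -/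
structure PreSemifield (F : Type*) [AddCommGroup F] where
  mul : F → F → F
  add_mul : ∀ a b c : F, mul (a + b) c = mul a c + mul b c
  mul_add : ∀ a b c : F, mul a (b + c) = mul a b + mul a c
  eq_zero_or_eq_zero_of_mul_eq_zero : ∀ a b : F, mul a b = 0 → a = 0 ∨ b = 0

namespace PreSemifield

variable {F : Type*} [AddCommGroup F] (S : PreSemifield F)

theorem mul_zero (a : F) : S.mul a 0 = 0 := by
  have h := S.mul_add a 0 0
  rw [add_zero] at h
  exact left_eq_add.mp h

theorem zero_mul (b : F) : S.mul 0 b = 0 := by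
  have h := S.add_mul 0 0 b
  rw [add_zero] at h
  exact left_eq_add.mp h

theorem mul_neg (a b : F) : S.mul a (-b) = -S.mul a b := by
  have h := S.mul_add a b (-b)
  rw [add_neg_cancel, S.mul_zero] at h
  linear_combination (norm := abel) -h

theorem neg_mul (a b : F) : S.mul (-a) b = -S.mul a b := by
  have h := S.add_mul a (-a) b
  rw [add_neg_cancel, S.zero_mul] at h
  linear_combination (norm := abel) -h

end PreSemifield

/-- The semifield group `G(F)` of a pre-semifield `F`: the set `F × F × F` with
multiplication `(a₁,b₁,c₁) ⬝ (a₂,b₂,c₂) = (a₁+a₂, b₁+b₂, c₁+c₂+a₁*b₂)`. -/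
def SemifieldGroup {F : Type*} [AddCommGroup F] (_S : PreSemifield F) : Type _ :=
  F × F × F

namespace SemifieldGroup

variable {F : Type*} [AddCommGroup F] (S : PreSemifield F)

instance : Group (SemifieldGroup S) where
  mul x y := (x.1 + y.1, x.2.1 + y.2.1, x.2.2 + y.2.2 + S.mul x.1 y.2.1)
  one := ((0 : F), (0 : F), (0 : F))
  inv x := (-x.1, -x.2.1, -x.2.2 + S.mul x.1 x.2.1)
  mul_assoc x y z := by
    show ((_ : F), (_ : F), (_ : F)) = ((_ : F), (_ : F), (_ : F))
    refine Prod.ext (add_assoc _ _ _) (Prod.ext (add_assoc _ _ _) ?_)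
    show x.2.2 + y.2.2 + S.mul x.1 y.2.1 + z.2.2 + S.mul (x.1 + y.1) z.2.1 =
      x.2.2 + (y.2.2 + z.2.2 + S.mul y.1 z.2.1) + S.mul x.1 (y.2.1 + z.2.1)
    rw [S.add_mul, S.mul_add]
    abel
  one_mul x := by
    show ((_ : F), (_ : F), (_ : F)) = x
    refine Prod.ext (zero_add _) (Prod.ext (zero_add _) ?_)
    show 0 + x.2.2 + S.mul 0 x.2.1 = x.2.2
    rw [S.zero_mul, zero_add, add_zero]
  mul_one x := by
    show ((_ : F), (_ : F), (_ : F)) = x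
    refine Prod.ext (add_zero _) (Prod.ext (add_zero _) ?_)
    show x.2.2 + 0 + S.mul x.1 0 = x.2.2
    rw [S.mul_zero, add_zero, add_zero]
  inv_mul_cancel x := by
    show ((_ : F), (_ : F), (_ : F)) = ((0 : F), (0 : F), (0 : F))
    refine Prod.ext (neg_add_cancel _) (Prod.ext (neg_add_cancel _) ?_)
    show -x.2.2 + S.mul x.1 x.2.1 + x.2.2 + S.mul (-x.1) x.2.1 = 0
    rw [S.neg_mul]
    abel

instance [Finite F] : Finite (SemifieldGroup S) :=
  inferInstanceAs (Finite (F × F × F))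

end SemifieldGroup

namespace SemifieldGroup

variable {F : Type*} [AddCommGroup F] (S : PreSemifield F)

/-- The subgroup `A₁ = {(a, 0, c) : a, c ∈ F}` of the semifield group `G(F)`. -/
def A1 : Subgroup (SemifieldGroup S) where
  carrier := {x : F × F × F | x.2.1 = 0}
  mul_mem' {x y} hx hy := by
    show x.2.1 + y.2.1 = 0
    rw [show x.2.1 = 0 from hx, show y.2.1 = 0 from hy, add_zero]
  one_mem' := rfl
  inv_mem' {x} hx := by
    show -x.2.1 = 0
    rw [show x.2.1 = 0 from hx, neg_zero]

/-- The subgroup `A₂ = {(0, b, c) : b, c ∈ F}` of the semifield group `G(F)`. -/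
def A2 : Subgroup (SemifieldGroup S) where
  carrier := {x : F × F × F | x.1 = 0}
  mul_mem' {x y} hx hy := by
    show x.1 + y.1 = 0
    rw [show x.1 = 0 from hx, show y.1 = 0 from hy, add_zero]
  one_mem' := rfl
  inv_mem' {x} hx := by
    show -x.1 = 0
    rw [show x.1 = 0 from hx, neg_zero]

end SemifieldGroup

/-! Left and right multiplications by nonzero elements of a finite pre-semifield are bijective,
so for every non-central `g` the commutator `⁅g, x⁆ = (0, 0, g₁ * x₂ - x₁ * g₂)` runs over the
whole centre `Z = {(0, 0, c)}` as `x` varies. Hence `G' = Z`, and the centre of `G ⧸ N` is `Z ⧸ N`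
for every `N < Z`. The additive group of `F` is elementary abelian, hence so is `G ⧸ Z`, and in a
`p`-group this forces `Φ(G) = G'`. All of this passes to `G ⧸ N`, which is therefore extraspecial
as soon as `|Z ⧸ N| = p`. -/

open scoped commutatorElement

section

open Subgroup

theorem Submodule.exists_isCoatom_notMem {K V : Type*} [Field K] [AddCommGroup V] [Module K V]
    {v : V} (hv : v ≠ 0) : ∃ M : Submodule K V, IsCoatom M ∧ v ∉ M := by
  obtain ⟨f, hf⟩ := Module.Projective.exists_dual_eq_one K hv
  refine ⟨LinearMap.ker f, LinearMap.isCoatom_ker_of_surjective fun c => ⟨c • v, by simp [hf]⟩, ?_⟩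
  simp [hf]

theorem frattini_eq_bot_of_pow_eq_one {A : Type*} [CommGroup A] {p : ℕ} [Fact p.Prime]
    (hA : ∀ x : A, x ^ p = 1) : frattini A = ⊥ := by
  let _ : Module (ZMod p) (Additive A) :=
    AddCommGroup.zmodModule fun x => congrArg Additive.ofMul (hA x.toMul)
  refine eq_bot_iff.mpr fun v hv => by_contra fun hv1 => ?_
  obtain ⟨M, hM, hvM⟩ := Submodule.exists_isCoatom_notMem (K := ZMod p) (v := Additive.ofMul v) hv1
  rw [← (AddSubgroup.toZModSubmodule p).symm.isCoatom_iff,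
    ← Subgroup.toAddSubgroup.symm.isCoatom_iff] at hM
  exact hvM (frattini_le_coatom hM hv)

variable {G : Type*} [Group G] {p : ℕ} [Fact p.Prime]

theorem frattini_le_commutator (hpow : ∀ g : G, g ^ p ∈ commutator G) :
    frattini G ≤ commutator G := by
  have hA : ∀ x : Abelianization G, x ^ p = 1 := by
    rintro ⟨g⟩
    rw [Abelianization.mk_eq_of, ← map_pow, ← MonoidHom.mem_ker, Abelianization.ker_of]
    exact hpow g
  have := frattini_le_comap_frattini_of_surjective (φ := Abelianization.of (G := G))
    QuotientGroup.mk_surjective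
  rwa [frattini_eq_bot_of_pow_eq_one hA, MonoidHom.comap_bot, Abelianization.ker_of] at this

theorem commutator_le_of_isCoatom [Group.IsNilpotent G] {M : Subgroup G} (hM : IsCoatom M) :
    commutator G ≤ M := by
  have := NormalizerCondition.normal_of_coatom M Group.normalizerCondition_of_isNilpotent hM
  obtain ⟨g, -, hg⟩ := SetLike.exists_of_lt hM.lt_top
  refine Normal.commutator_le_of_self_sup_commutative_eq_top (H := zpowers g)
    (hM.2 _ (left_lt_sup.mpr ?_)) inferInstance
  exact fun h => hg (h (mem_zpowers g))

theorem commutator_le_frattini [Group.IsNilpotent G] : commutator G ≤ frattini G :=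
  le_iInf₂ fun _ => commutator_le_of_isCoatom

theorem isExtraspecial_of_commutator_eq_center [Finite G] (hG : IsPGroup p G)
    (hcomm : commutator G = center G) (hpow : ∀ g : G, g ^ p ∈ center G)
    (hcard : Nat.card (center G) = p) : IsExtraspecial p G := by
  have := hG.isNilpotent
  have hfrattini : frattini G = commutator G :=
    le_antisymm (frattini_le_commutator (hcomm ▸ hpow)) commutator_le_frattini
  refine ⟨?_, hcomm, (hcomm ▸ hfrattini).symm, hcard⟩
  by_contra! hab
  have : IsMulCommutative G := ⟨⟨hab⟩⟩
  rw [← hcomm, _root_.commutator_eq_bot, card_bot] at hcard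
  exact (Fact.out : p.Prime).one_lt.ne hcard

theorem center_quotient_eq_map_center {N : Subgroup G} [N.Normal] (hN : N < center G)
    (hsurj : ∀ g ∉ center G, ∀ z ∈ center G, ∃ x, ⁅g, x⁆ = z) :
    center (G ⧸ N) = (center G).map (QuotientGroup.mk' N) := by
  refine le_antisymm (fun q hq => ?_) (map_le_iff_le_comap.mpr fun z hz => ?_)
  · obtain ⟨g, rfl⟩ := QuotientGroup.mk'_surjective N q
    refine ⟨g, by_contra fun hg => hN.not_ge fun z hz => ?_, rfl⟩
    obtain ⟨x, rfl⟩ := hsurj g hg z hz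
    rw [← QuotientGroup.eq_one_iff, ← QuotientGroup.mk'_apply, map_commutatorElement,
      commutatorElement_eq_one_iff_mul_comm]
    exact (mem_center_iff.mp hq _).symm
  · refine mem_comap.mpr (mem_center_iff.mpr fun q => ?_)
    obtain ⟨x, rfl⟩ := QuotientGroup.mk'_surjective N q
    rw [← map_mul, ← map_mul, mem_center_iff.mp hz x]

theorem card_map_mk'_eq_index_subgroupOf (N H : Subgroup G) [N.Normal] :
    Nat.card (H.map (QuotientGroup.mk' N)) = (N.subgroupOf H).index := by
  rw [← MonoidHom.domRestrict_range, ← index_ker, MonoidHom.ker_domRestrict,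
    QuotientGroup.ker_mk']

theorem isSemiExtraspecial_of_commutator_eq_center [Finite G] (hG : IsPGroup p G)
    (hcomm : commutator G = center G)
    (hsurj : ∀ g ∉ center G, ∀ z ∈ center G, ∃ x, ⁅g, x⁆ = z)
    (hpow : ∀ g : G, g ^ p ∈ center G) : IsSemiExtraspecial p G := by
  intro N _ hNZ hindex
  have hN : N < center G := lt_of_le_not_ge hNZ fun hZN => (Fact.out : p.Prime).one_lt.ne' <| by
    rw [← hindex, index_eq_one, subgroupOf_eq_top]
    exact hZN
  have hcenter := center_quotient_eq_map_center hN hsurj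
  refine isExtraspecial_of_commutator_eq_center (hG.to_quotient N) ?_ ?_ ?_
  · rw [hcenter, ← hcomm, map_commutator_eq, MonoidHom.range_eq_top.mpr
      (QuotientGroup.mk'_surjective N), _root_.commutator_def]
  · intro q
    obtain ⟨g, rfl⟩ := QuotientGroup.mk'_surjective N q
    rw [hcenter, ← map_pow]
    exact mem_map_of_mem _ (hpow g)
  · rw [hcenter, card_map_mk'_eq_index_subgroupOf, hindex]

end

namespace PreSemifield

variable {F : Type*} [AddCommGroup F]

section

variable (S : PreSemifield F)

def mulLeft (a : F) : F →+ F :=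
  AddMonoidHom.mk' (S.mul a) (S.mul_add a)

def mulRight (b : F) : F →+ F :=
  AddMonoidHom.mk' (fun a => S.mul a b) fun a a' => S.add_mul a a' b

@[simp] theorem mulLeft_apply (a b : F) : S.mulLeft a b = S.mul a b := rfl

@[simp] theorem mulRight_apply (a b : F) : S.mulRight b a = S.mul a b := rfl

theorem mulLeft_injective {a : F} (ha : a ≠ 0) : Function.Injective (S.mulLeft a) :=
  (injective_iff_map_eq_zero _).mpr fun b hb =>
    (S.eq_zero_or_eq_zero_of_mul_eq_zero a b hb).resolve_left ha

theorem mulRight_injective {b : F} (hb : b ≠ 0) : Function.Injective (S.mulRight b) :=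
  (injective_iff_map_eq_zero _).mpr fun a ha =>
    (S.eq_zero_or_eq_zero_of_mul_eq_zero a b ha).resolve_right hb

theorem mulLeft_surjective [Finite F] {a : F} (ha : a ≠ 0) : Function.Surjective (S.mulLeft a) :=
  Finite.injective_iff_surjective.mp (S.mulLeft_injective ha)

theorem mulRight_surjective [Finite F] {b : F} (hb : b ≠ 0) :
    Function.Surjective (S.mulRight b) :=
  Finite.injective_iff_surjective.mp (S.mulRight_injective hb)

end

theorem prime_nsmul_eq_zero (S : PreSemifield F) [Finite F] {p : ℕ} [Fact p.Prime]
    (hdvd : p ∣ Nat.card F) (x : F) : p • x = 0 := by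
  -- `x = y * b` with `y` of order `p`, by Cauchy's theorem
  obtain ⟨y, hy⟩ := exists_prime_addOrderOf_dvd_card' p hdvd
  have hy0 : y ≠ 0 := by
    rintro rfl
    exact (Fact.out : p.Prime).ne_one (by rwa [addOrderOf_zero, eq_comm] at hy)
  obtain ⟨b, rfl⟩ := S.mulLeft_surjective hy0 x
  change p • S.mulRight b y = 0
  rw [← map_nsmul, ← hy, addOrderOf_nsmul_eq_zero, map_zero]

end PreSemifield

namespace SemifieldGroup

open Subgroup

variable {F : Type*} [AddCommGroup F] {S : PreSemifield F}

@[ext]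
theorem ext {x y : SemifieldGroup S} (h₁ : x.1 = y.1) (h₂ : x.2.1 = y.2.1) (h₃ : x.2.2 = y.2.2) :
    x = y :=
  Prod.ext h₁ (Prod.ext h₂ h₃)

def mk (a b c : F) : SemifieldGroup S := (a, b, c)

@[simp] theorem fst_mk (a b c : F) : (mk a b c : SemifieldGroup S).1 = a := rfl
@[simp] theorem fst_snd_mk (a b c : F) : (mk a b c : SemifieldGroup S).2.1 = b := rfl
@[simp] theorem snd_snd_mk (a b c : F) : (mk a b c : SemifieldGroup S).2.2 = c := rfl

@[simp] theorem fst_one : (1 : SemifieldGroup S).1 = 0 := rfl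
@[simp] theorem fst_snd_one : (1 : SemifieldGroup S).2.1 = 0 := rfl
@[simp] theorem snd_snd_one : (1 : SemifieldGroup S).2.2 = 0 := rfl

@[simp] theorem fst_mul (x y : SemifieldGroup S) : (x * y).1 = x.1 + y.1 := rfl
@[simp] theorem fst_snd_mul (x y : SemifieldGroup S) : (x * y).2.1 = x.2.1 + y.2.1 := rfl
@[simp] theorem snd_snd_mul (x y : SemifieldGroup S) :
    (x * y).2.2 = x.2.2 + y.2.2 + S.mul x.1 y.2.1 := rfl

@[simp] theorem fst_inv (x : SemifieldGroup S) : x⁻¹.1 = -x.1 := rfl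
@[simp] theorem fst_snd_inv (x : SemifieldGroup S) : x⁻¹.2.1 = -x.2.1 := rfl
@[simp] theorem snd_snd_inv (x : SemifieldGroup S) : x⁻¹.2.2 = -x.2.2 + S.mul x.1 x.2.1 := rfl

@[simp] theorem fst_pow (x : SemifieldGroup S) (n : ℕ) : (x ^ n).1 = n • x.1 := by
  induction n with
  | zero => rw [pow_zero, zero_nsmul]; rfl
  | succ n ih => rw [pow_succ, fst_mul, ih, succ_nsmul]

@[simp] theorem fst_snd_pow (x : SemifieldGroup S) (n : ℕ) : (x ^ n).2.1 = n • x.2.1 := by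
  induction n with
  | zero => rw [pow_zero, zero_nsmul]; rfl
  | succ n ih => rw [pow_succ, fst_snd_mul, ih, succ_nsmul]

theorem commutatorElement_eq (g x : SemifieldGroup S) :
    ⁅g, x⁆ = mk 0 0 (S.mul g.1 x.2.1 - S.mul x.1 g.2.1) := by
  ext
  · simp [commutatorElement_def]
  · simp [commutatorElement_def]
  · simp only [commutatorElement_def, snd_snd_mk, snd_snd_mul, fst_mul, snd_snd_inv, fst_inv,
      fst_snd_inv, S.add_mul, S.mul_neg, S.neg_mul]
    abel

theorem commutatorElement_eq_one_iff {g x : SemifieldGroup S} :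
    ⁅g, x⁆ = 1 ↔ S.mul g.1 x.2.1 = S.mul x.1 g.2.1 := by
  rw [commutatorElement_eq]
  refine ⟨fun h => sub_eq_zero.mp (congrArg (fun y : SemifieldGroup S => y.2.2) h), fun h => ?_⟩
  ext <;> simp [h]

theorem mem_center_iff [Nontrivial F] {g : SemifieldGroup S} :
    g ∈ center (SemifieldGroup S) ↔ g.1 = 0 ∧ g.2.1 = 0 := by
  obtain ⟨u, hu⟩ := exists_ne (0 : F)
  simp_rw [Subgroup.mem_center_iff, ← commutatorElement_eq_one_iff_mul_comm,
    commutatorElement_eq_one_iff]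
  refine ⟨fun h => ⟨?_, ?_⟩, fun ⟨h₁, h₂⟩ x => by rw [h₁, h₂, S.mul_zero, S.zero_mul]⟩
  · have h' : S.mul g.1 u = 0 := by simpa [S.zero_mul, eq_comm] using h (mk 0 u 0)
    exact (S.eq_zero_or_eq_zero_of_mul_eq_zero _ _ h').resolve_right hu
  · have h' : S.mul u g.2.1 = 0 := by simpa [S.mul_zero, eq_comm] using h (mk u 0 0)
    exact (S.eq_zero_or_eq_zero_of_mul_eq_zero _ _ h').resolve_left hu

theorem exists_commutatorElement_eq [Finite F] [Nontrivial F] :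
    ∀ g ∉ center (SemifieldGroup S), ∀ z ∈ center (SemifieldGroup S), ∃ x, ⁅g, x⁆ = z := by
  intro g hg z hz
  rw [mem_center_iff] at hz
  rw [mem_center_iff, not_and_or] at hg
  rcases hg with hg | hg
  · obtain ⟨b, hb⟩ := S.mulLeft_surjective hg z.2.2
    refine ⟨mk 0 b 0, ?_⟩
    rw [commutatorElement_eq]
    ext
    exacts [hz.1.symm, hz.2.symm, by simpa [S.zero_mul] using hb]
  · obtain ⟨a, ha⟩ := S.mulRight_surjective hg (-z.2.2)
    refine ⟨mk a 0 0, ?_⟩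
    rw [commutatorElement_eq]
    ext
    exacts [hz.1.symm, hz.2.symm, by simp_all [S.mul_zero]]

variable (S)

theorem commutator_eq_center [Finite F] [Nontrivial F] :
    commutator (SemifieldGroup S) = center (SemifieldGroup S) := by
  refine le_antisymm (commutator_le.mpr fun g _ x _ => ?_) fun z hz => ?_
  · rw [commutatorElement_eq, mem_center_iff]
    exact ⟨rfl, rfl⟩
  · obtain ⟨u, hu⟩ := exists_ne (0 : F)
    obtain ⟨x, rfl⟩ := exists_commutatorElement_eq (mk u 0 0)
      (fun h => hu (mem_center_iff.mp h).1) z hz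
    exact commutator_mem_commutator (mem_top _) (mem_top _)

theorem pow_mem_center [Nontrivial F] {p : ℕ} (hp : ∀ x : F, p • x = 0) (g : SemifieldGroup S) :
    g ^ p ∈ center (SemifieldGroup S) :=
  mem_center_iff.mpr ⟨by simp [hp], by simp [hp]⟩

theorem card_eq : Nat.card (SemifieldGroup S) = Nat.card F ^ 3 := by
  rw [SemifieldGroup, Nat.card_prod, Nat.card_prod]
  ring

theorem card_center [Nontrivial F] : Nat.card (center (SemifieldGroup S)) = Nat.card F :=
  Nat.card_congr
    { toFun := fun z => (z : SemifieldGroup S).2.2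
      invFun := fun c => ⟨mk 0 0 c, mem_center_iff.mpr ⟨rfl, rfl⟩⟩
      left_inv := fun z => by
        obtain ⟨h₁, h₂⟩ := mem_center_iff.mp z.2
        exact Subtype.ext (ext h₁.symm h₂.symm rfl)
      right_inv := fun _ => rfl }

theorem index_center [Finite F] [Nontrivial F] :
    (center (SemifieldGroup S)).index = Nat.card F ^ 2 := by
  have := card_mul_index (center (SemifieldGroup S))
  rw [card_center, card_eq] at this
  exact Nat.eq_of_mul_eq_mul_left Nat.card_pos (this.trans (by ring))

variable {S}

theorem mem_A1 {x : SemifieldGroup S} : x ∈ A1 S ↔ x.2.1 = 0 := Iff.rfl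

theorem mem_A2 {x : SemifieldGroup S} : x ∈ A2 S ↔ x.1 = 0 := Iff.rfl

variable (S)

theorem isMulCommutative_A1 : IsMulCommutative (A1 S) :=
  ⟨⟨fun x y => Subtype.ext <| commutatorElement_eq_one_iff_mul_comm.mp <|
    commutatorElement_eq_one_iff.mpr <| by
      rw [mem_A1.mp x.2, mem_A1.mp y.2, S.mul_zero, S.mul_zero]⟩⟩

theorem isMulCommutative_A2 : IsMulCommutative (A2 S) :=
  ⟨⟨fun x y => Subtype.ext <| commutatorElement_eq_one_iff_mul_comm.mp <|
    commutatorElement_eq_one_iff.mpr <| by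
      rw [mem_A2.mp x.2, mem_A2.mp y.2, S.zero_mul, S.zero_mul]⟩⟩

theorem A1_ne_A2 [Nontrivial F] : A1 S ≠ A2 S := by
  obtain ⟨u, hu⟩ := exists_ne (0 : F)
  intro h
  exact hu (h ▸ (rfl : mk u 0 0 ∈ A1 S) : mk u 0 0 ∈ A2 S)

theorem card_A1 : Nat.card (A1 S) = Nat.card F ^ 2 := by
  rw [sq, ← Nat.card_prod]
  exact Nat.card_congr
    { toFun := fun x => ((x : SemifieldGroup S).1, (x : SemifieldGroup S).2.2)
      invFun := fun w => ⟨mk w.1 0 w.2, rfl⟩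
      left_inv := fun x => Subtype.ext (ext rfl (mem_A1.mp x.2).symm rfl)
      right_inv := fun _ => rfl }

theorem card_A2 : Nat.card (A2 S) = Nat.card F ^ 2 := by
  rw [sq, ← Nat.card_prod]
  exact Nat.card_congr
    { toFun := fun x => ((x : SemifieldGroup S).2.1, (x : SemifieldGroup S).2.2)
      invFun := fun w => ⟨mk 0 w.1 w.2, rfl⟩
      left_inv := fun x => Subtype.ext (ext (mem_A2.mp x.2).symm rfl rfl)
      right_inv := fun _ => rfl }

end SemifieldGroup

/-- The semifield group `G(F)` of a pre-semifield `F` of order `p ^ a` is an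
ultraspecial `p`-group of order `|F| ^ 3` having at least two abelian subgroups of
order `|F| ^ 2`, namely `A₁ = {(a,0,c)}` and `A₂ = {(0,b,c)}`. -/
theorem semifieldGroup_ultraspecial {F : Type*} [AddCommGroup F] [Finite F]
    (S : PreSemifield F) (p a : ℕ) (hp : p.Prime) (ha : 0 < a)
    (hFcard : Nat.card F = p ^ a) :
    IsPGroup p (SemifieldGroup S) ∧
    IsSemiExtraspecial p (SemifieldGroup S) ∧
    Nat.card (commutator (SemifieldGroup S)) ^ 2 = (commutator (SemifieldGroup S)).index ∧
    Nat.card (SemifieldGroup S) = Nat.card F ^ 3 ∧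
    IsMulCommutative (SemifieldGroup.A1 S) ∧ IsMulCommutative (SemifieldGroup.A2 S) ∧
    SemifieldGroup.A1 S ≠ SemifieldGroup.A2 S ∧
    Nat.card (SemifieldGroup.A1 S) = Nat.card F ^ 2 ∧
    Nat.card (SemifieldGroup.A2 S) = Nat.card F ^ 2 := by
  have : Fact p.Prime := ⟨hp⟩
  have : Nontrivial F :=
    Finite.one_lt_card_iff_nontrivial.mp (hFcard ▸ Nat.one_lt_pow ha.ne' hp.one_lt)
  have hpow := SemifieldGroup.pow_mem_center S
    (S.prime_nsmul_eq_zero (hFcard ▸ dvd_pow_self p ha.ne'))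
  have hcomm := SemifieldGroup.commutator_eq_center S
  have hG : IsPGroup p (SemifieldGroup S) :=
    IsPGroup.of_card (n := 3 * a) (by rw [SemifieldGroup.card_eq, hFcard, ← pow_mul, mul_comm])
  refine ⟨hG, isSemiExtraspecial_of_commutator_eq_center hG hcomm
      SemifieldGroup.exists_commutatorElement_eq hpow, ?_, SemifieldGroup.card_eq S,
    SemifieldGroup.isMulCommutative_A1 S, SemifieldGroup.isMulCommutative_A2 S,
    SemifieldGroup.A1_ne_A2 S, SemifieldGroup.card_A1 S, SemifieldGroup.card_A2 S⟩
  rw [hcomm, SemifieldGroup.card_center, SemifieldGroup.index_center]
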